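/- For every P ∈ K⟨n⟩ and every k with 1 ≤ k ≤ n, one has δ_k(C P) = (N + I)(δ_k P), where I is the identity map of K⟨n⟩. -/

import Mathlib

/-! Setup: the free associative algebra `K⟨X_1,…,X_n⟩` realized as the monoid
algebra of the free monoid on `Fin n`, together with the partial cyclic
derivatives `δ_j`, the number operator `N` and the cyclic symmetrization `C`. -/

noncomputable section

/-- `K⟨n⟩`, the ring of polynomials in `n` noncommuting indeterminates. -/
abbrev FreePoly (K : Type) [CommSemiring K] (n : ℕ) : Type :=
  MonoidAlgebra K (FreeMonoid (Fin n))

/-- The monomial `X_{i_1} ⋯ X_{i_p}` associated to the word `w = [i_1,…,i_p]`. -/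
def mono (K : Type) [Field K] {n : ℕ} (w : List (Fin n)) : FreePoly K n :=
  MonoidAlgebra.single (FreeMonoid.ofList w) 1

/-- The indeterminate `X k`. -/
def Xvar (K : Type) [Field K] {n : ℕ} (k : Fin n) : FreePoly K n := mono K [k]

variable {K : Type} [Field K] [CharZero K] {n : ℕ}

/-- The partial cyclic derivative `δ_j = μ̃ ∘ ∂_j`: on a monomial
`X_{i_0} ⋯ X_{i_s}` it gives `∑_{p : i_p = j} X_{i_{p+1}} ⋯ X_{i_s} X_{i_0} ⋯ X_{i_{p-1}}`. -/
def cycDeriv (j : Fin n) : FreePoly K n →ₗ[K] FreePoly K n :=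
  (Finsupp.lsum K fun w => LinearMap.toSpanSingleton K _
    (∑ p : Fin (FreeMonoid.toList w).length,
      if (FreeMonoid.toList w).get p = j then
        mono K ((FreeMonoid.toList w).drop (p + 1) ++ (FreeMonoid.toList w).take p)
      else 0)) ∘ₗ (MonoidAlgebra.coeffLinearEquiv K).toLinearMap

/-- The number operator `N`, multiplying a monomial by its degree. -/
def numOp : FreePoly K n →ₗ[K] FreePoly K n :=
  (Finsupp.lsum K fun w => LinearMap.toSpanSingleton K _
    ((FreeMonoid.toList w).length • mono K (FreeMonoid.toList w))) ∘ₗ (MonoidAlgebra.coeffLinearEquiv K).toLinearMap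

/-- The cyclic symmetrization `C`, sending a monomial of degree `p ≥ 1` to the
sum of its `p` cyclic rotations (and `1` to `0`). -/
def cycSym : FreePoly K n →ₗ[K] FreePoly K n :=
  (Finsupp.lsum K fun w => LinearMap.toSpanSingleton K _
    (∑ p ∈ Finset.range (FreeMonoid.toList w).length,
      mono K ((FreeMonoid.toList w).rotate (p + 1)))) ∘ₗ (MonoidAlgebra.coeffLinearEquiv K).toLinearMap

/-! On a monomial `X_w`, `δ_k` is the sum, over the cyclic rotations `u` of `w`, of the
derivative that only strips a final letter `X_k` from `u`. Hence `δ_k` is invariant under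
rotating monomials, which gives `δ_k (C X_w) = |w| δ_k X_w`; and every term of `δ_k X_w` has
degree `|w| - 1`, so `(N + I) δ_k X_w = |w| δ_k X_w` as well. -/

theorem Finset.sum_range_succ_eq_sum_range {M : Type*} [AddCommMonoid M] (f : ℕ → M) {m : ℕ}
    (h : f m = f 0) : ∑ i ∈ Finset.range m, f (i + 1) = ∑ i ∈ Finset.range m, f i := by
  cases m with
  | zero => simp
  | succ m => rw [Finset.sum_range_succ, h, Finset.sum_range_succ' f]

namespace List

variable {α M : Type*} [AddCommMonoid M]

theorem sum_range_length_rotate_succ (f : List α → M) (w : List α) :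
    ∑ p ∈ Finset.range w.length, f (w.rotate (p + 1)) =
      ∑ p ∈ Finset.range w.length, f (w.rotate p) :=
  Finset.sum_range_succ_eq_sum_range (fun p => f (w.rotate p)) (by simp)

theorem sum_range_length_rotate_rotate (f : List α → M) (w : List α) (r : ℕ) :
    ∑ p ∈ Finset.range w.length, f ((w.rotate r).rotate p) =
      ∑ p ∈ Finset.range w.length, f (w.rotate p) := by
  induction r with
  | zero => simp
  | succ r ih =>
    have shift (p : ℕ) : (w.rotate (r + 1)).rotate p = (w.rotate r).rotate (p + 1) := by
      rw [rotate_rotate, rotate_rotate, Nat.add_right_comm, Nat.add_assoc]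
    simp only [shift]
    rw [← ih, ← length_rotate w r, sum_range_length_rotate_succ]

end List

section Monomials

variable {K : Type} [Field K] {n : ℕ}

/-- The part of `δ_k` coming from the last letter: `v X_k ↦ v`. -/
def lastDeriv (k : Fin n) (u : List (Fin n)) : FreePoly K n :=
  if u.getLast? = some k then mono K u.dropLast else 0

theorem lastDeriv_rotate_succ (k : Fin n) (w : List (Fin n)) (p : Fin w.length) :
    lastDeriv (K := K) k (w.rotate (p + 1)) =
      if w.get p = k then mono K (w.drop (p + 1) ++ w.take p) else 0 := by
  have hrot : w.rotate (p + 1) = (w.drop (p + 1) ++ w.take p) ++ [w.get p] := by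
    rw [List.rotate_eq_drop_append_take (by omega), List.append_assoc, List.get_eq_getElem,
      List.take_concat_get']
  simp only [lastDeriv, hrot, List.getLast?_concat, List.dropLast_concat, Option.some.injEq]

theorem cycDeriv_mono (k : Fin n) (w : List (Fin n)) :
    cycDeriv k (mono K w) = ∑ p : Fin w.length,
      if w.get p = k then mono K (w.drop (p + 1) ++ w.take p) else 0 := by
  simp only [cycDeriv, mono, LinearMap.comp_apply, LinearEquiv.coe_coe,
    MonoidAlgebra.coeffLinearEquiv_apply, MonoidAlgebra.coeff_single, Finsupp.lsum_single,
    LinearMap.toSpanSingleton_apply, one_smul]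
  rfl

theorem cycSym_mono (w : List (Fin n)) :
    cycSym (mono K w) = ∑ p ∈ Finset.range w.length, mono K (w.rotate (p + 1)) := by
  simp [cycSym, mono]

theorem numOp_mono (u : List (Fin n)) : numOp (mono K u) = u.length • mono K u := by
  simp [numOp, mono]

theorem cycDeriv_mono_eq_sum_lastDeriv (k : Fin n) (w : List (Fin n)) :
    cycDeriv k (mono K w) = ∑ p ∈ Finset.range w.length, lastDeriv k (w.rotate p) := by
  rw [← List.sum_range_length_rotate_succ, cycDeriv_mono,
    ← Fin.sum_univ_eq_sum_range (fun p => lastDeriv k (w.rotate (p + 1)))]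
  simp only [lastDeriv_rotate_succ]

theorem cycDeriv_mono_rotate (k : Fin n) (w : List (Fin n)) (r : ℕ) :
    cycDeriv k (mono K (w.rotate r)) = cycDeriv k (mono K w) := by
  rw [cycDeriv_mono_eq_sum_lastDeriv, cycDeriv_mono_eq_sum_lastDeriv, List.length_rotate,
    List.sum_range_length_rotate_rotate]

theorem cycDeriv_cycSym_mono (k : Fin n) (w : List (Fin n)) :
    cycDeriv k (cycSym (mono K w)) = w.length • cycDeriv k (mono K w) := by
  simp only [cycSym_mono, map_sum, cycDeriv_mono_rotate, Finset.sum_const, Finset.card_range]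

theorem numOp_lastDeriv_add_self (k : Fin n) (u : List (Fin n)) :
    numOp (lastDeriv k u) + lastDeriv (K := K) k u = u.length • lastDeriv k u := by
  unfold lastDeriv
  split_ifs with hlast
  · have hu : u ≠ [] := by rintro rfl; simp at hlast
    rw [numOp_mono, List.length_dropLast, ← succ_nsmul,
      Nat.sub_add_cancel (List.length_pos_iff.2 hu)]
  · simp

theorem numOp_cycDeriv_mono_add_self (k : Fin n) (w : List (Fin n)) :
    numOp (cycDeriv k (mono K w)) + cycDeriv k (mono K w) = w.length • cycDeriv k (mono K w) := by
  simp only [cycDeriv_mono_eq_sum_lastDeriv, map_sum, Finset.smul_sum, ← Finset.sum_add_distrib,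
    numOp_lastDeriv_add_self, List.length_rotate]

end Monomials

theorem cycDeriv_cycSym (P : FreePoly K n) (k : Fin n) :
    cycDeriv k (cycSym P) = numOp (cycDeriv k P) + cycDeriv k P := by
  suffices h : cycDeriv k ∘ₗ cycSym = (numOp + LinearMap.id) ∘ₗ cycDeriv k from
    LinearMap.congr_fun h P
  ext w : 1
  apply LinearMap.ext_ring
  change cycDeriv k (cycSym (mono K w.toList)) =
    numOp (cycDeriv k (mono K w.toList)) + cycDeriv k (mono K w.toList)
  rw [cycDeriv_cycSym_mono, numOp_cycDeriv_mono_add_self]
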